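/- arXiv:2412.01381 — 3 statements merged into one kernel-verified Lean document; each statement's English description precedes it below -/
import Mathlib

section
/- Let V be a reflexive real normed space (the canonical inclusion of V into its double dual is surjective). Let Φ : V → ℝ be a convex, lower semicontinuous function with inf_{u∈V} Φ(u) > −∞, and let A : V → V* be a map such that A = −∂Φ, i.e. for all u, v ∈ V one has Φ(v) ≥ Φ(u) − ⟨A(u), v − u⟩. Then there exist constants δ₄ > 0 and C₄ ∈ ℝ such that 2⟨A(u), u⟩ ≤ C₄ − δ₄‖A(u)‖_{V*} for every u ∈ V. -/
/-!
Reflexivity makes `V` complete, so by Baire's theorem some closed sublevel set of `Φ` has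
interior; a convex function bounded above near one point is continuous, hence `Φ ≤ M` on a
closed ball of radius `r` about `0`. Testing the subgradient inequality for `A u` at `v = ±w`,
`‖w‖ ≤ r`, gives `⟨A u, u⟩ + r‖A u‖ ≤ M - Φ u`, and at `v = 0` it gives
`⟨A u, u⟩ ≤ Φ 0 - Φ u`; adding the two and bounding `Φ u` below yields the claim with `δ₄ = r`.
-/

open Filter Metric Set Topology

theorem completeSpace_of_surjective_inclusionInDoubleDual {𝕜 E : Type*} [RCLike 𝕜]
    [NormedAddCommGroup E] [NormedSpace 𝕜 E]
    (h : Function.Surjective (NormedSpace.inclusionInDoubleDual 𝕜 E)) : CompleteSpace E :=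
  (LinearIsometryEquiv.ofSurjective (NormedSpace.inclusionInDoubleDualLi 𝕜) h).toIsometryEquiv
    |>.completeSpace

theorem LowerSemicontinuous.exists_isBoundedUnder_le_nhds {X : Type*} [TopologicalSpace X]
    [BaireSpace X] [Nonempty X] {f : X → ℝ} (hf : LowerSemicontinuous f) :
    ∃ x₀, (𝓝 x₀).IsBoundedUnder (· ≤ ·) f := by
  have hcover : ⋃ n : ℕ, f ⁻¹' Iic (n : ℝ) = univ :=
    eq_univ_of_forall fun x ↦ mem_iUnion.2 (exists_nat_ge (f x))
  obtain ⟨n, x₀, hx₀⟩ :=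
    nonempty_interior_of_iUnion_of_closed (fun n : ℕ ↦ hf.isClosed_preimage n) hcover
  exact ⟨x₀, n, eventually_map.2 <|
    eventually_of_mem (mem_interior_iff_mem_nhds.1 hx₀) fun _ hx ↦ hx⟩

theorem ConvexOn.continuous_of_lowerSemicontinuous {E : Type*} [NormedAddCommGroup E]
    [NormedSpace ℝ E] [BaireSpace E] {f : E → ℝ} (hconv : ConvexOn ℝ univ f)
    (hlsc : LowerSemicontinuous f) : Continuous f := by
  obtain ⟨x₀, hx₀⟩ := hlsc.exists_isBoundedUnder_le_nhds
  rw [← continuousOn_univ]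
  have := (hconv.continuousOn_tfae isOpen_univ univ_nonempty).out 3 1
  exact this.1 ⟨x₀, mem_univ _, hx₀⟩

theorem ContinuousAt.exists_forall_closedBall_le {X : Type*} [PseudoMetricSpace X]
    {f : X → ℝ} {x : X} (hf : ContinuousAt f x) :
    ∃ r > 0, ∃ M, ∀ v ∈ closedBall x r, f v ≤ M := by
  obtain ⟨r, hr, hM⟩ := nhds_basis_closedBall.eventually_iff.1
    (hf.eventually (eventually_le_nhds (lt_add_one (f x))))
  exact ⟨r, hr, _, fun v hv ↦ hM hv⟩

theorem StrongDual.apply_add_mul_norm_le_of_subgradient {E : Type*} [NormedAddCommGroup E]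
    [NormedSpace ℝ E] {f : E → ℝ} {ℓ : StrongDual ℝ E} {u : E} {r M : ℝ} (hr : 0 < r)
    (hℓ : ∀ v, f u - ℓ (v - u) ≤ f v) (hM : ∀ v ∈ closedBall (0 : E) r, f v ≤ M) :
    ℓ u + r * ‖ℓ‖ ≤ M - f u := by
  have hupper : ∀ w ∈ closedBall (0 : E) r, ℓ w ≤ M - f u - ℓ u := fun w hw ↦ by
    have := (hℓ (-w)).trans (hM (-w) (by simpa using hw))
    simp only [map_sub, map_neg] at this
    linarith
  have hbound : ∀ w ∈ closedBall (0 : E) r, ‖ℓ w‖ ≤ M - f u - ℓ u := fun w hw ↦ by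
    have := hupper (-w) (by simpa using hw)
    rw [map_neg] at this
    exact abs_le.2 ⟨by linarith, hupper w hw⟩
  have := ContinuousLinearMap.opNorm_bound_of_ball_bound hr _ ℓ hbound
  rw [le_div_iff₀ hr] at this
  linarith

/-- If `A = -∂Φ` for a convex, lower semicontinuous, bounded-below functional `Φ`
on a reflexive real normed space `V`, then there exist `δ₄ > 0` and `C₄ ∈ ℝ` with
`2⟨A(u), u⟩ ≤ C₄ - δ₄‖A(u)‖` for every `u ∈ V`. -/
theorem subgradient_cone_condition
    {V : Type*} [NormedAddCommGroup V] [NormedSpace ℝ V]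
    (hrefl : Function.Surjective (NormedSpace.inclusionInDoubleDual ℝ V))
    (Φ : V → ℝ) (hconv : ConvexOn ℝ Set.univ Φ)
    (hlsc : LowerSemicontinuous Φ)
    (hbdd : BddBelow (Set.range Φ))
    (A : V → StrongDual ℝ V)
    (hsub : ∀ u v : V, Φ v ≥ Φ u - A u (v - u)) :
    ∃ δ₄ : ℝ, 0 < δ₄ ∧ ∃ C₄ : ℝ, ∀ u : V, 2 * A u u ≤ C₄ - δ₄ * ‖A u‖ := by
  have : CompleteSpace V := completeSpace_of_surjective_inclusionInDoubleDual hrefl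
  obtain ⟨r, hr, M, hM⟩ :=
    (hconv.continuous_of_lowerSemicontinuous hlsc).continuousAt.exists_forall_closedBall_le
  obtain ⟨m, hm⟩ := hbdd
  refine ⟨r, hr, M + Φ 0 - 2 * m, fun u ↦ ?_⟩
  have hcone := StrongDual.apply_add_mul_norm_le_of_subgradient hr (hsub u) hM
  have hzero : Φ u + A u u ≤ Φ 0 := by simpa using hsub u 0
  have hmu : m ≤ Φ u := hm ⟨u, rfl⟩
  linarith
end

section
/- Let p ≥ 2 and ν > 0 be real numbers. Then the function f : ℝ → ℝ defined by f(x) = 2ν·( (1 + |x|)^p / p − (1 + |x|)^{p−1} / (p−1) ) is convex on ℝ. -/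
open Set Real

/-! On `[0, ∞)` the profile `(1+t)^p/p − (1+t)^(p−1)/(p−1)` has derivative `t·(1+t)^(p−2)`,
which is nonnegative and, for `p ≥ 2`, a product of nonnegative increasing functions. So the
profile is increasing and convex there, and composing it with the convex function `|x|` keeps
it convex on `ℝ`. -/

noncomputable def powerLawProfile (p t : ℝ) : ℝ :=
  (1 + t) ^ p / p - (1 + t) ^ (p - 1) / (p - 1)

lemma hasDerivAt_one_add_rpow (q : ℝ) {x : ℝ} (hx : -1 < x) :
    HasDerivAt (fun t : ℝ => (1 + t) ^ q) (q * (1 + x) ^ (q - 1)) x := by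
  simpa using ((hasDerivAt_id' x).const_add 1).rpow_const (p := q) (Or.inl (by linarith))

lemma hasDerivAt_powerLawProfile {p x : ℝ} (hp : 1 < p) (hx : -1 < x) :
    HasDerivAt (powerLawProfile p) (x * (1 + x) ^ (p - 2)) x := by
  have hx' : 1 + x ≠ 0 := by linarith
  have key := ((hasDerivAt_one_add_rpow p hx).div_const p).sub
    ((hasDerivAt_one_add_rpow (p - 1) hx).div_const (p - 1))
  have hsplit : (1 + x) ^ (p - 1) = (1 + x) ^ (p - 2) * (1 + x) := by
    rw [← rpow_add_one hx']; ring_nf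
  refine key.congr_deriv ?_
  rw [show p - 1 - 1 = p - 2 by ring, hsplit]
  field_simp [show p - 1 ≠ 0 by linarith]
  ring

lemma differentiableOn_powerLawProfile {p : ℝ} (hp : 1 < p) :
    DifferentiableOn ℝ (powerLawProfile p) (Ioi (-1)) := fun _ hx =>
  (hasDerivAt_powerLawProfile hp hx).differentiableAt.differentiableWithinAt

lemma monotoneOn_powerLawProfile {p : ℝ} (hp : 1 < p) :
    MonotoneOn (powerLawProfile p) (Ici 0) := by
  have hdiff := differentiableOn_powerLawProfile hp
  refine monotoneOn_of_deriv_nonneg (convex_Ici 0) (hdiff.continuousOn.mono ?_) (hdiff.mono ?_) ?_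
  · exact Ici_subset_Ioi.mpr (by norm_num)
  · rw [interior_Ici]; exact Ioi_subset_Ioi (by norm_num)
  · rw [interior_Ici]
    intro x (hx : 0 < x)
    rw [(hasDerivAt_powerLawProfile hp (by linarith)).deriv]
    positivity

lemma convexOn_powerLawProfile {p : ℝ} (hp : 2 ≤ p) :
    ConvexOn ℝ (Ici 0) (powerLawProfile p) := by
  have hdiff := differentiableOn_powerLawProfile (by linarith : 1 < p)
  refine MonotoneOn.convexOn_of_deriv (convex_Ici 0) (hdiff.continuousOn.mono ?_) (hdiff.mono ?_) ?_
  · exact Ici_subset_Ioi.mpr (by norm_num)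
  · rw [interior_Ici]; exact Ioi_subset_Ioi (by norm_num)
  rw [interior_Ici]
  have hderiv : EqOn (fun x => x * (1 + x) ^ (p - 2)) (deriv (powerLawProfile p)) (Ioi 0) :=
    fun x (hx : 0 < x) => ((hasDerivAt_powerLawProfile (by linarith) (by linarith)).deriv).symm
  refine MonotoneOn.congr ?_ hderiv
  refine monotoneOn_id.mul (fun a (ha : 0 < a) b _ hab => ?_) (fun x hx => le_of_lt hx)
    (fun x (hx : 0 < x) => by positivity)
  exact rpow_le_rpow (by linarith) (by linarith) (by linarith)

lemma image_univ_abs : (fun x : ℝ => |x|) '' univ = Ici 0 := by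
  ext y; simpa using ⟨fun ⟨x, hx⟩ => hx ▸ abs_nonneg x, fun hy => ⟨y, abs_of_nonneg hy⟩⟩

/-- For `p ≥ 2` and `ν > 0`, the function
`x ↦ 2ν·((1+|x|)^p/p − (1+|x|)^(p-1)/(p-1))` is convex on `ℝ`. -/
theorem powerLaw_potential_convex
    (p ν : ℝ) (hp : 2 ≤ p) (hν : 0 < ν) :
    ConvexOn ℝ Set.univ
      (fun x : ℝ => 2 * ν * ((1 + |x|) ^ p / p - (1 + |x|) ^ (p - 1) / (p - 1))) := by
  have hcomp : ConvexOn ℝ univ (powerLawProfile p ∘ fun x : ℝ => |x|) := by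
    refine ConvexOn.comp ?_ convexOn_univ_norm ?_
    · rw [image_univ_abs]; exact convexOn_powerLawProfile hp
    · rw [image_univ_abs]; exact monotoneOn_powerLawProfile (by linarith)
  exact hcomp.smul (by positivity : (0 : ℝ) ≤ 2 * ν)
end

section
/- Let α ≥ 2 and β ≥ 0 be real numbers with α > β + 2, let s > 0 and K ≥ 0, and set c₃ := ((β+2)(α−β−2)/(2(α+β))) · (β+2)^{(α+β)/(α−β−2)} · K^{2(α+β)/(α−β−2)} / (s·(α+β)/(2β+2))^{(2β+2)/(α−β−2)}. Then for every y ≥ 0 one has ((β+2)²/2) · y^{2β+2} · K² ≤ s · ((β+2)/2) · y^{α+β} + c₃. -/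
/-!
Young's inequality `a b ≤ a^p/p + b^q/q` with the conjugate exponents
`p = (α+β)/(2β+2)` and `q = (α+β)/(α-β-2)`, applied to `u = y^(2β+2)` (so that `u^p = y^(α+β)`)
and rescaled so that the `u^p` term is exactly the coercive term `s·((β+2)/2)·y^(α+β)`;
`c₃` is the conjugate term `b^q/q` it produces.
-/

open Real

lemma Real.HolderConjugate.div_div_sub {a b : ℝ} (hb : 0 < b) (hba : b < a) :
    (a / b).HolderConjugate (a / (a - b)) := by
  have ha : 0 < a := hb.trans hba
  have hab : 0 < a - b := sub_pos.2 hba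
  refine Real.holderConjugate_iff.2 ⟨(one_lt_div hb).2 hba, ?_⟩
  field_simp
  ring

lemma mul_le_mul_rpow_add_of_holderConjugate {p q A C u : ℝ} (hpq : p.HolderConjugate q)
    (hA : 0 ≤ A) (hC : 0 < C) (hu : 0 ≤ u) :
    A * u ≤ C * u ^ p + A ^ q / (q * (C * p) ^ (q - 1)) := by
  have hCp : 0 < C * p := mul_pos hC hpq.pos
  -- Young's inequality for `(r u) (A / r)`, with `r` chosen so that `r ^ p / p = C`.
  set r : ℝ := (C * p) ^ p⁻¹
  have hr : 0 < r := rpow_pos_of_pos hCp _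
  have hrp : r ^ p = C * p := rpow_inv_rpow hCp.le hpq.ne_zero
  have hrq : r ^ q = (C * p) ^ (q - 1) := by
    rw [← rpow_mul hCp.le, inv_mul_eq_div, hpq.symm.div_conj_eq_sub_one]
  calc A * u = (r * u) * (A / r) := by field_simp
    _ ≤ (r * u) ^ p / p + (A / r) ^ q / q :=
      young_inequality_of_nonneg (by positivity) (by positivity) hpq
    _ = C * u ^ p + A ^ q / (q * (C * p) ^ (q - 1)) := by
      rw [mul_rpow hr.le hu, div_rpow hA hr.le, hrp, hrq]
      field_simp [hpq.ne_zero]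

theorem absorption_inequality_c3_general
    (α β s K : ℝ) (hβ : 0 ≤ β) (hαβ : β + 2 < α) (hs : 0 < s) (hK : 0 ≤ K) :
    ∀ y ≥ (0 : ℝ),
      (β + 2) ^ 2 / 2 * y ^ (2 * β + 2) * K ^ 2 ≤
        s * ((β + 2) / 2) * y ^ (α + β) +
          (β + 2) * (α - β - 2) / (2 * (α + β)) *
              (β + 2) ^ ((α + β) / (α - β - 2)) * K ^ (2 * (α + β) / (α - β - 2)) /
            (s * (α + β) / (2 * β + 2)) ^ ((2 * β + 2) / (α - β - 2)) := by
  intro y hy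
  have hβ2 : 0 < 2 * β + 2 := by linarith
  have hgap : 0 < α - β - 2 := by linarith
  have hpq := Real.HolderConjugate.div_div_sub hβ2 (by linarith : 2 * β + 2 < α + β)
  rw [show α + β - (2 * β + 2) = α - β - 2 by ring] at hpq
  set p := (α + β) / (2 * β + 2)
  set q := (α + β) / (α - β - 2)
  have hq : q - 1 = (2 * β + 2) / (α - β - 2) := by
    simp only [q]
    field_simp
    ring
  have hyp : (y ^ (2 * β + 2)) ^ p = y ^ (α + β) := by
    rw [← rpow_mul hy, mul_div_cancel₀ _ hβ2.ne']
  have hAq : ((β + 2) * K ^ 2) ^ q = (β + 2) ^ q * K ^ (2 * (α + β) / (α - β - 2)) := by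
    rw [mul_rpow (by linarith) (by positivity), ← rpow_natCast, ← rpow_mul hK, Nat.cast_ofNat,
      mul_div_assoc]
  have hcoef : (β + 2) / 2 / q = (β + 2) * (α - β - 2) / (2 * (α + β)) := by
    simp only [q]
    field_simp
  have hyoung := mul_le_mul_rpow_add_of_holderConjugate hpq (A := (β + 2) * K ^ 2)
    (u := y ^ (2 * β + 2)) (by positivity) hs (by positivity)
  rw [hyp, hAq, hq, mul_div_assoc' s] at hyoung
  clear_value p q
  calc (β + 2) ^ 2 / 2 * y ^ (2 * β + 2) * K ^ 2
      = (β + 2) / 2 * ((β + 2) * K ^ 2 * y ^ (2 * β + 2)) := by ring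
    _ ≤ (β + 2) / 2 * (s * y ^ (α + β) + (β + 2) ^ q * K ^ (2 * (α + β) / (α - β - 2)) /
          (q * (s * (α + β) / (2 * β + 2)) ^ ((2 * β + 2) / (α - β - 2)))) := by gcongr
    _ = _ := by
      rw [← hcoef]
      ring

/-- Quantitative absorption inequality defining `c₃`: for `α ≥ 2`, `β ≥ 0` with
`α > β + 2`, `s > 0`, `K ≥ 0` and
`c₃ := ((β+2)(α−β−2)/(2(α+β)))·(β+2)^((α+β)/(α−β−2))·K^(2(α+β)/(α−β−2)) /
(s(α+β)/(2β+2))^((2β+2)/(α−β−2))`, one has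
`((β+2)²/2)·y^(2β+2)·K² ≤ s·((β+2)/2)·y^(α+β) + c₃` for all `y ≥ 0`. -/
theorem absorption_inequality_c3
    (α β s K : ℝ) (hα : 2 ≤ α) (hβ : 0 ≤ β) (hαβ : β + 2 < α) (hs : 0 < s) (hK : 0 ≤ K) :
    ∀ y ≥ (0 : ℝ),
      (β + 2) ^ 2 / 2 * y ^ (2 * β + 2) * K ^ 2 ≤
        s * ((β + 2) / 2) * y ^ (α + β) +
          (β + 2) * (α - β - 2) / (2 * (α + β)) *
              (β + 2) ^ ((α + β) / (α - β - 2)) * K ^ (2 * (α + β) / (α - β - 2)) /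
            (s * (α + β) / (2 * β + 2)) ^ ((2 * β + 2) / (α - β - 2)) :=
  absorption_inequality_c3_general α β s K hβ hαβ hs hK
end
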